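/- arXiv:1102.1621 — 2 statements merged into one kernel-verified Lean document; each statement's English description precedes it below -/
import Mathlib

section
/- Let A ∈ ℂ^{M×N_a} and B ∈ ℂ^{M×N_b} be matrices with unit ℓ²-norm columns, with coherences μ_a and μ_b respectively and mutual coherence μ_m. Let E ⊆ {1,…,N_b} with |E| = n_e and let n_x be a positive integer such that μ_m² · 2 n_x n_e < [1 − μ_a(2n_x−1)]_+ · [1 − μ_b(n_e−1)]_+. Then B_E^H B_E is invertible, and with R_E = I_M − B_E (B_E^H B_E)^{−1} B_E^H, no nonzero vector with at most 2n_x nonzero entries lies in the kernel of R_E A: for every x' ∈ ℂ^{N_a} with ‖x'‖₀ ≤ 2n_x and R_E A x' = 0, one has x' = 0. In particular, any x with ‖x‖₀ ≤ n_x is the unique vector satisfying R_E A x' = R_E A x among all x' with ‖x'‖₀ ≤ n_x. -/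
open scoped BigOperators ComplexConjugate
open Matrix

/-- Coherence of a matrix: max over distinct column pairs of |aₖᴴ aₗ| (0 if fewer than 2 columns). -/
noncomputable def coh {m n : Type*} [Fintype m] [Fintype n] (A : Matrix m n ℂ) : ℝ :=
  ⨆ k, ⨆ l, ⨆ _ : k ≠ l, ‖∑ i, conj (A i k) * A i l‖

/-- Mutual coherence between two matrices: max over column pairs of |aₖᴴ bₗ|. -/
noncomputable def mcoh {m na nb : Type*} [Fintype m] [Fintype na] [Fintype nb]
    (A : Matrix m na ℂ) (B : Matrix m nb ℂ) : ℝ :=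
  ⨆ k, ⨆ l, ‖∑ i, conj (A i k) * B i l‖

/-- All columns have unit ℓ²-norm. -/
def unitCols {m n : Type*} [Fintype m] (A : Matrix m n ℂ) : Prop :=
  ∀ k, ∑ i, ‖A i k‖ ^ 2 = 1

/-- Number of nonzero entries of a vector. -/
noncomputable def l0 {n : Type*} (v : n → ℂ) : ℕ := {i | v i ≠ 0}.ncard

/-- ℓ¹ norm of a vector. -/
noncomputable def l1 {n : Type*} [Fintype n] (v : n → ℂ) : ℝ := ∑ i, ‖v i‖

/-- Squared ℓ² norm of a vector. -/
noncomputable def l2sq {n : Type*} [Fintype n] (v : n → ℂ) : ℝ := ∑ i, ‖v i‖ ^ 2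

/-- Submatrix consisting of the columns with index in `E`. -/
def colsub {m n : Type*} (B : Matrix m n ℂ) (E : Finset n) : Matrix m {j // j ∈ E} ℂ :=
  fun i j => B i j.val

/-- Orthogonal projector onto the orthogonal complement of the column span of `B_E`. -/
noncomputable def projC {m n : Type*} [Fintype m] [DecidableEq m] [DecidableEq n]
    (B : Matrix m n ℂ) (E : Finset n) : Matrix m m ℂ :=
  1 - colsub B E * ((colsub B E)ᴴ * colsub B E)⁻¹ * (colsub B E)ᴴ
section Aux
open Finset
variable {m n : Type*} [Fintype m] [Fintype n]

lemma nsq (z : ℂ) : (‖z‖ ^ 2 : ℝ) = (conj z * z).re := by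
  rw [← Complex.normSq_eq_conj_mul_self]
  simp [Complex.normSq_eq_norm_sq, ← Complex.ofReal_pow]

lemma conj_mul_self (z : ℂ) : conj z * z = ((‖z‖ ^ 2 : ℝ) : ℂ) := by
  rw [← Complex.normSq_eq_conj_mul_self]
  norm_cast
  simp [Complex.normSq_eq_norm_sq]

lemma coh_nonneg (A : Matrix m n ℂ) : 0 ≤ coh A :=
  Real.iSup_nonneg fun _ => Real.iSup_nonneg fun _ => Real.iSup_nonneg fun _ => norm_nonneg _

lemma coh_bound (A : Matrix m n ℂ) {k l : n} (h : k ≠ l) :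
    ‖∑ i, conj (A i k) * A i l‖ ≤ coh A := by
  calc ‖∑ i, conj (A i k) * A i l‖
      = ⨆ _ : k ≠ l, ‖∑ i, conj (A i k) * A i l‖ :=
        (ciSup_pos (f := fun _ : k ≠ l => ‖∑ i, conj (A i k) * A i l‖) h).symm
    _ ≤ ⨆ l, ⨆ _ : k ≠ l, ‖∑ i, conj (A i k) * A i l‖ :=
        le_ciSup (f := fun l => ⨆ _ : k ≠ l, ‖∑ i, conj (A i k) * A i l‖)
          (Set.Finite.bddAbove (Set.finite_range _)) l
    _ ≤ coh A :=
        le_ciSup (f := fun k => ⨆ l, ⨆ _ : k ≠ l, ‖∑ i, conj (A i k) * A i l‖)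
          (Set.Finite.bddAbove (Set.finite_range _)) k

lemma mcoh_bound {nb : Type*} [Fintype nb] (A : Matrix m n ℂ) (B : Matrix m nb ℂ) (k : n) (l : nb) :
    ‖∑ i, conj (A i k) * B i l‖ ≤ mcoh A B := by
  calc ‖∑ i, conj (A i k) * B i l‖
      ≤ ⨆ l, ‖∑ i, conj (A i k) * B i l‖ :=
        le_ciSup (f := fun l => ‖∑ i, conj (A i k) * B i l‖)
          (Set.Finite.bddAbove (Set.finite_range _)) l
    _ ≤ mcoh A B :=
        le_ciSup (f := fun k => ⨆ l, ‖∑ i, conj (A i k) * B i l‖)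
          (Set.Finite.bddAbove (Set.finite_range _)) k

lemma l0_le_card (v : n → ℂ) : l0 v ≤ Fintype.card n := by
  rw [l0]
  calc {i | v i ≠ 0}.ncard ≤ (Set.univ : Set n).ncard :=
        Set.ncard_le_ncard (Set.subset_univ _) Set.finite_univ
    _ = Fintype.card n := by rw [Set.ncard_univ, Nat.card_eq_fintype_card]

lemma l0_sub_le (u v : n → ℂ) : l0 (u - v) ≤ l0 u + l0 v := by
  refine le_trans (le_trans (Set.ncard_le_ncard ?_ (Set.toFinite _)) (Set.ncard_union_le _ _)) le_rfl
  intro i hi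
  simp only [Set.mem_setOf_eq, Set.mem_union, Pi.sub_apply] at *
  by_contra hc
  push_neg at hc
  simp [hc.1, hc.2] at hi

lemma l1_sq_le (v : n → ℂ) (s : ℕ) (hs : l0 v ≤ s) :
    (∑ k, ‖v k‖) ^ 2 ≤ (s : ℝ) * ∑ k, ‖v k‖ ^ 2 := by
  classical
  set S := Finset.univ.filter (fun k => v k ≠ 0) with hS
  have hSset : {i | v i ≠ 0} = ↑S := by ext i; simp [hS]
  have hcard : S.card ≤ s := by
    have : l0 v = S.card := by rw [l0, hSset, Set.ncard_coe_finset]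
    omega
  have h1 : ∑ k, ‖v k‖ = ∑ k ∈ S, ‖v k‖ :=
    (Finset.sum_subset S.subset_univ (fun x _ hx => by
      simp only [hS, mem_filter, mem_univ, true_and, not_not] at hx; simp [hx])).symm
  have h2 : ∑ k, ‖v k‖ ^ 2 = ∑ k ∈ S, ‖v k‖ ^ 2 :=
    (Finset.sum_subset S.subset_univ (fun x _ hx => by
      simp only [hS, mem_filter, mem_univ, true_and, not_not] at hx; simp [hx])).symm
  have cs := Finset.sum_mul_sq_le_sq_mul_sq S (fun _ => 1) (fun k => ‖v k‖)
  simp only [one_mul, one_pow, Finset.sum_const, nsmul_eq_mul, mul_one] at cs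
  rw [h1, h2]
  calc (∑ k ∈ S, ‖v k‖) ^ 2 ≤ (S.card : ℝ) * ∑ k ∈ S, ‖v k‖ ^ 2 := cs
    _ ≤ (s : ℝ) * ∑ k ∈ S, ‖v k‖ ^ 2 := by
        apply mul_le_mul_of_nonneg_right (by exact_mod_cast hcard)
        positivity

lemma gram_id (C : Matrix m n ℂ) (v : n → ℂ) :
    ∑ i, ‖C.mulVec v i‖ ^ 2
      = (∑ k, ∑ l, conj (v k) * ((∑ i, conj (C i k) * C i l) * v l)).re := by
  have key : ∑ i, conj (C.mulVec v i) * C.mulVec v i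
      = ∑ k, ∑ l, conj (v k) * ((∑ i, conj (C i k) * C i l) * v l) := by
    calc ∑ i, conj (C.mulVec v i) * C.mulVec v i
        = ∑ i, ∑ k, ∑ l, conj (v k) * (conj (C i k) * C i l * v l) := by
          refine Finset.sum_congr rfl fun i _ => ?_
          rw [show C.mulVec v i = ∑ k, C i k * v k from rfl, map_sum, Finset.sum_mul]
          refine Finset.sum_congr rfl fun k _ => ?_
          rw [Finset.mul_sum]
          refine Finset.sum_congr rfl fun l _ => ?_
          rw [_root_.map_mul]
          ring
      _ = ∑ k, ∑ i, ∑ l, conj (v k) * (conj (C i k) * C i l * v l) := Finset.sum_comm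
      _ = ∑ k, ∑ l, ∑ i, conj (v k) * (conj (C i k) * C i l * v l) :=
          Finset.sum_congr rfl fun k _ => Finset.sum_comm
      _ = ∑ k, ∑ l, conj (v k) * ((∑ i, conj (C i k) * C i l) * v l) := by
          refine Finset.sum_congr rfl fun k _ => Finset.sum_congr rfl fun l _ => ?_
          rw [Finset.sum_mul, Finset.mul_sum]
  rw [← key, Complex.re_sum]
  exact Finset.sum_congr rfl fun i _ => nsq _

lemma quad_lower (C : Matrix m n ℂ) (hC : unitCols C) (μ : ℝ)
    (hμ : ∀ k l : n, k ≠ l → ‖∑ i, conj (C i k) * C i l‖ ≤ μ) (hμ0 : 0 ≤ μ)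
    (v : n → ℂ) (s : ℝ) (hs : (∑ k, ‖v k‖) ^ 2 ≤ s * ∑ k, ‖v k‖ ^ 2) :
    (1 - μ * (s - 1)) * ∑ k, ‖v k‖ ^ 2 ≤ ∑ i, ‖C.mulVec v i‖ ^ 2 := by
  classical
  rw [gram_id]
  set g : n → n → ℂ := fun k l => conj (v k) * ((∑ i, conj (C i k) * C i l) * v l) with hg
  have hdiag : ∀ k, (g k k).re = ‖v k‖ ^ 2 := by
    intro k
    have h1 : (∑ i, conj (C i k) * C i k) = 1 := by
      have : ∑ i, conj (C i k) * C i k = ((∑ i, ‖C i k‖ ^ 2 : ℝ) : ℂ) := by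
        rw [Complex.ofReal_sum]
        exact Finset.sum_congr rfl fun i _ => conj_mul_self _
      rw [this, hC k, Complex.ofReal_one]
    simp only [hg, h1, one_mul]
    rw [← nsq]
  have hsplit : ∑ k, ∑ l, g k l = (∑ k, g k k) + ∑ k, ∑ l ∈ univ.erase k, g k l := by
    rw [← Finset.sum_add_distrib]
    exact Finset.sum_congr rfl fun k _ => (Finset.add_sum_erase _ _ (mem_univ k)).symm
  have habs : ‖∑ k, ∑ l ∈ univ.erase k, g k l‖
      ≤ μ * ((∑ k, ‖v k‖) ^ 2 - ∑ k, ‖v k‖ ^ 2) := by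
    calc ‖∑ k, ∑ l ∈ univ.erase k, g k l‖
        ≤ ∑ k, ‖∑ l ∈ univ.erase k, g k l‖ :=
          norm_sum_le univ (fun k => ∑ l ∈ univ.erase k, g k l)
      _ ≤ ∑ k, ∑ l ∈ univ.erase k, ‖g k l‖ :=
          Finset.sum_le_sum fun k _ => norm_sum_le (univ.erase k) (g k)
      _ ≤ ∑ k, ∑ l ∈ univ.erase k, ‖v k‖ * (μ * ‖v l‖) := by
          refine Finset.sum_le_sum fun k _ => Finset.sum_le_sum fun l hl => ?_
          have hkl : k ≠ l := (Finset.ne_of_mem_erase hl).symm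
          simp only [hg, norm_mul, RCLike.norm_conj]
          exact mul_le_mul_of_nonneg_left
            (mul_le_mul_of_nonneg_right (hμ k l hkl) (norm_nonneg _)) (norm_nonneg _)
      _ = μ * ((∑ k, ‖v k‖) ^ 2 - ∑ k, ‖v k‖ ^ 2) := by
          have : ∀ k : n, ∑ l ∈ univ.erase k, ‖v k‖ * (μ * ‖v l‖)
              = ‖v k‖ * (μ * ((∑ l, ‖v l‖) - ‖v k‖)) := by
            intro k
            rw [← Finset.mul_sum, ← Finset.mul_sum, Finset.sum_erase_eq_sub (mem_univ k)]
          rw [Finset.sum_congr rfl fun k _ => this k]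
          ring_nf
          rw [Finset.sum_congr rfl (fun k (_ : k ∈ univ) => by ring :
            ∀ k ∈ univ, ‖v k‖ * μ * (∑ l, ‖v l‖) - ‖v k‖ ^ 2 * μ
              = (∑ l, ‖v l‖) * μ * ‖v k‖ - μ * ‖v k‖ ^ 2)]
          rw [Finset.sum_sub_distrib, ← Finset.mul_sum, ← Finset.mul_sum]
          ring
  have hre : -(μ * ((∑ k, ‖v k‖) ^ 2 - ∑ k, ‖v k‖ ^ 2))
      ≤ (∑ k, ∑ l ∈ univ.erase k, g k l).re := by
    have := Complex.abs_re_le_norm (∑ k, ∑ l ∈ univ.erase k, g k l)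
    have h2 := abs_le.mp (le_trans this habs)
    linarith [h2.1]
  have hfin : (∑ k, ∑ l, g k l).re = (∑ k, ‖v k‖ ^ 2) + (∑ k, ∑ l ∈ univ.erase k, g k l).re := by
    rw [hsplit, Complex.add_re, Complex.re_sum]
    congr 1
    exact Finset.sum_congr rfl fun k _ => hdiag k
  rw [hfin]
  have hmul : μ * ((∑ k, ‖v k‖) ^ 2 - ∑ k, ‖v k‖ ^ 2) ≤ μ * ((s - 1) * ∑ k, ‖v k‖ ^ 2) := by
    apply mul_le_mul_of_nonneg_left _ hμ0
    nlinarith [hs]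
  nlinarith [hre, hmul]

lemma inner_id (C : Matrix m n ℂ) (z : n → ℂ) (y : m → ℂ) (hy : y = C.mulVec z) :
    ∑ i, ‖y i‖ ^ 2 = (∑ k, conj (∑ i, conj (C i k) * y i) * z k).re := by
  have key : ∑ i, conj (y i) * y i = ∑ k, conj (∑ i, conj (C i k) * y i) * z k := by
    calc ∑ i, conj (y i) * y i
        = ∑ i, ∑ k, conj (y i) * C i k * z k := by
          refine Finset.sum_congr rfl fun i _ => ?_
          nth_rewrite 2 [hy]
          simp only [Matrix.mulVec, dotProduct, Finset.mul_sum]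
          exact Finset.sum_congr rfl fun k _ => by ring
      _ = ∑ k, ∑ i, conj (y i) * C i k * z k := Finset.sum_comm
      _ = ∑ k, conj (∑ i, conj (C i k) * y i) * z k := by
          refine Finset.sum_congr rfl fun k _ => ?_
          rw [map_sum, Finset.sum_mul]
          refine Finset.sum_congr rfl fun i _ => ?_
          rw [_root_.map_mul, Complex.conj_conj]
          ring
  rw [← key, Complex.re_sum]
  exact Finset.sum_congr rfl fun i _ => nsq _

end Aux

set_option maxHeartbeats 1000000 in
/-- Kernel property of the projected dictionary R_E A: no nonzero 2n_x-sparse vector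
lies in its kernel, hence n_x-sparse vectors are uniquely determined by R_E A x. -/
theorem projected_dictionary_kernel_property
    {M Na Nb : ℕ} (A : Matrix (Fin M) (Fin Na) ℂ) (B : Matrix (Fin M) (Fin Nb) ℂ)
    (hA : unitCols A) (hB : unitCols B)
    (μa μb μm : ℝ) (hμa : μa = coh A) (hμb : μb = coh B) (hμm : μm = mcoh A B)
    (E : Finset (Fin Nb)) (ne : ℕ) (hne : E.card = ne)
    (nx : ℕ) (hnx : 0 < nx)
    (hcond : μm ^ 2 * (2 * nx * ne) <
      max (1 - μa * (2 * (nx : ℝ) - 1)) 0 * max (1 - μb * ((ne : ℝ) - 1)) 0) :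
    IsUnit ((colsub B E)ᴴ * colsub B E).det ∧
    (∀ x' : Fin Na → ℂ, l0 x' ≤ 2 * nx →
      (projC B E * A).mulVec x' = 0 → x' = 0) ∧
    (∀ x x' : Fin Na → ℂ, l0 x ≤ nx → l0 x' ≤ nx →
      (projC B E * A).mulVec x' = (projC B E * A).mulVec x → x' = x) := by
  classical
  set BE := colsub B E with hBEdef
  have hBE_unit : unitCols BE := fun k => hB k.val
  have hBE_coh : ∀ k l : {j // j ∈ E}, k ≠ l → ‖∑ i, conj (BE i k) * BE i l‖ ≤ μb := by
    intro k l hkl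
    rw [hμb]
    exact coh_bound B (fun h => hkl (Subtype.ext h))
  have hA_coh : ∀ k l : Fin Na, k ≠ l → ‖∑ i, conj (A i k) * A i l‖ ≤ μa := by
    intro k l hkl; rw [hμa]; exact coh_bound A hkl
  have hμa0 : 0 ≤ μa := hμa ▸ coh_nonneg A
  have hμb0 : 0 ≤ μb := hμb ▸ coh_nonneg B
  set α := 1 - μa * (2 * (nx : ℝ) - 1) with hαdef
  set β := 1 - μb * ((ne : ℝ) - 1) with hβdef
  have hprod : 0 < max α 0 * max β 0 := lt_of_le_of_lt (by positivity) hcond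
  have hα : 0 < α := by
    rcases le_or_gt α 0 with h | h
    · rw [max_eq_right h, zero_mul] at hprod; exact absurd hprod (lt_irrefl 0)
    · exact h
  have hβ : 0 < β := by
    rcases le_or_gt β 0 with h | h
    · rw [max_eq_right h, mul_zero] at hprod; exact absurd hprod (lt_irrefl 0)
    · exact h
  have hcond' : μm ^ 2 * (2 * (nx : ℝ) * (ne : ℝ)) < α * β := by
    rwa [max_eq_left hα.le, max_eq_left hβ.le] at hcond
  have hsub_card : Fintype.card {j // j ∈ E} = ne := by rw [Fintype.card_coe, hne]
  have quadBE : ∀ v : {j // j ∈ E} → ℂ,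
      β * ∑ k, ‖v k‖ ^ 2 ≤ ∑ i, ‖BE.mulVec v i‖ ^ 2 := by
    intro v
    have hl0v : l0 v ≤ ne := by rw [← hsub_card]; exact l0_le_card v
    have hcs : (∑ k, ‖v k‖) ^ 2 ≤ ((ne : ℝ)) * ∑ k, ‖v k‖ ^ 2 := by
      have := l1_sq_le v ne hl0v; exact_mod_cast this
    exact quad_lower BE hBE_unit μb hBE_coh hμb0 v (ne : ℝ) hcs
  have part1 : IsUnit ((colsub B E)ᴴ * colsub B E).det := by
    rw [isUnit_iff_ne_zero]
    intro hdet
    obtain ⟨v, hv0, hGv⟩ := Matrix.exists_mulVec_eq_zero_iff.mpr hdet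
    have hid : ∑ i, ‖BE.mulVec v i‖ ^ 2
        = (∑ k, conj (v k) * ((BEᴴ * BE).mulVec v) k).re := by
      rw [gram_id]
      congr 1
      refine Finset.sum_congr rfl fun k _ => ?_
      rw [← Finset.mul_sum]
      congr 1
    have hzero : ∑ i, ‖BE.mulVec v i‖ ^ 2 = 0 := by
      rw [hid, show (BEᴴ * BE).mulVec v = 0 from hGv]
      simp
    obtain ⟨k, hk⟩ := Function.ne_iff.mp hv0
    have hpos : 0 < ∑ k, ‖v k‖ ^ 2 := by
      have h1 : (0 : ℝ) < ‖v k‖ ^ 2 := by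
        have := norm_pos_iff.mpr hk; positivity
      exact Finset.sum_pos' (fun k _ => by positivity) ⟨k, Finset.mem_univ k, h1⟩
    have := quadBE v
    nlinarith
  have key : ∀ x' : Fin Na → ℂ, l0 x' ≤ 2 * nx →
      (projC B E * A).mulVec x' = 0 → x' = 0 := by
    intro x' hl0x hker
    by_contra hx0
    set y := A.mulVec x' with hy
    have hPy : (projC B E).mulVec y = 0 := by
      rw [hy, Matrix.mulVec_mulVec]; exact hker
    set z := ((BEᴴ * BE)⁻¹ * BEᴴ).mulVec y with hz
    have hyz : y = BE.mulVec z := by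
      have h1 : y - (BE * ((BEᴴ * BE)⁻¹ * BEᴴ)).mulVec y = 0 := by
        have h0 := hPy
        simp only [projC] at h0
        rw [← hBEdef] at h0
        rw [Matrix.sub_mulVec, Matrix.one_mulVec, Matrix.mul_assoc] at h0
        exact h0
      have h2 := sub_eq_zero.mp h1
      rw [h2, ← Matrix.mulVec_mulVec]
    set L1x := ∑ k, ‖x' k‖ with hL1xd
    set L2x := ∑ k, ‖x' k‖ ^ 2 with hL2xd
    set L1z := ∑ k, ‖z k‖ with hL1zd
    set L2z := ∑ k, ‖z k‖ ^ 2 with hL2zd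
    set Y := ∑ i, ‖y i‖ ^ 2 with hYd
    have hL2x : 0 < L2x := by
      obtain ⟨k, hk⟩ := Function.ne_iff.mp hx0
      have h1 : (0 : ℝ) < ‖x' k‖ ^ 2 := by
        have := norm_pos_iff.mpr hk; positivity
      exact Finset.sum_pos' (fun k _ => by positivity) ⟨k, Finset.mem_univ k, h1⟩
    have hL2z0 : 0 ≤ L2z := Finset.sum_nonneg fun k _ => by positivity
    have hY0 : 0 ≤ Y := Finset.sum_nonneg fun i _ => by positivity
    have h4 : L1x ^ 2 ≤ 2 * (nx : ℝ) * L2x := by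
      have := l1_sq_le x' (2 * nx) hl0x
      rw [hL1xd, hL2xd]; push_cast at this ⊢; linarith
    have h5 : L1z ^ 2 ≤ (ne : ℝ) * L2z := by
      have hl0z : l0 z ≤ ne := by rw [← hsub_card]; exact l0_le_card z
      have := l1_sq_le z ne hl0z
      rw [hL1zd, hL2zd]; exact_mod_cast this
    have h1 : α * L2x ≤ Y := by
      exact quad_lower A hA μa hA_coh hμa0 x' (2 * (nx : ℝ)) h4
    have h2 : β * L2z ≤ Y := by
      have := quadBE z
      rw [← hyz] at this
      exact this
    have h3 : Y ≤ μm * L1x * L1z := by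
      have hid := inner_id BE z y hyz
      have hwb : ∀ k : {j // j ∈ E}, ‖∑ i, conj (BE i k) * y i‖ ≤ μm * L1x := by
        intro k
        have hwk : (∑ i, conj (BE i k) * y i)
            = ∑ l, (∑ i, conj (BE i k) * A i l) * x' l := by
          calc ∑ i, conj (BE i k) * y i
              = ∑ i, ∑ l, conj (BE i k) * A i l * x' l := by
                refine Finset.sum_congr rfl fun i _ => ?_
                rw [hy, show A.mulVec x' i = ∑ l, A i l * x' l from rfl, Finset.mul_sum]
                exact Finset.sum_congr rfl fun l _ => by ring
            _ = ∑ l, ∑ i, conj (BE i k) * A i l * x' l := Finset.sum_comm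
            _ = ∑ l, (∑ i, conj (BE i k) * A i l) * x' l :=
                Finset.sum_congr rfl fun l _ => by rw [Finset.sum_mul]
        rw [hwk]
        calc ‖∑ l, (∑ i, conj (BE i k) * A i l) * x' l‖
            ≤ ∑ l, ‖(∑ i, conj (BE i k) * A i l) * x' l‖ := norm_sum_le _ _
          _ ≤ ∑ l, μm * ‖x' l‖ := by
              refine Finset.sum_le_sum fun l _ => ?_
              rw [norm_mul]
              refine mul_le_mul_of_nonneg_right ?_ (norm_nonneg _)
              have hconj : ∑ i, conj (BE i k) * A i l
                  = conj (∑ i, conj (A i l) * B i k.val) := by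
                rw [map_sum]
                refine Finset.sum_congr rfl fun i _ => ?_
                rw [_root_.map_mul, Complex.conj_conj]
                exact mul_comm _ _
              rw [hconj, RCLike.norm_conj, hμm]
              exact mcoh_bound A B l k.val
          _ = μm * L1x := by rw [← Finset.mul_sum]
      rw [hYd, hid]
      calc (∑ k, conj (∑ i, conj (BE i k) * y i) * z k).re
          ≤ ‖∑ k, conj (∑ i, conj (BE i k) * y i) * z k‖ := by
            exact le_trans (le_abs_self _) (Complex.abs_re_le_norm _)
        _ ≤ ∑ k, ‖conj (∑ i, conj (BE i k) * y i) * z k‖ := norm_sum_le _ _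
        _ ≤ ∑ k, (μm * L1x) * ‖z k‖ := by
            refine Finset.sum_le_sum fun k _ => ?_
            rw [norm_mul, RCLike.norm_conj]
            exact mul_le_mul_of_nonneg_right (hwb k) (norm_nonneg _)
        _ = μm * L1x * L1z := by rw [← Finset.mul_sum]
    clear_value y z L1x L2x L1z L2z Y
    have hY2 : Y ^ 2 ≤ μm ^ 2 * L1x ^ 2 * L1z ^ 2 := by
      have := pow_le_pow_left₀ hY0 h3 2
      calc Y ^ 2 ≤ (μm * L1x * L1z) ^ 2 := this
        _ = μm ^ 2 * L1x ^ 2 * L1z ^ 2 := by ring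
    have hL1z20 : (0 : ℝ) ≤ L1z ^ 2 := sq_nonneg _
    have hstep1 : μm ^ 2 * L1x ^ 2 * L1z ^ 2
        ≤ μm ^ 2 * (2 * (nx : ℝ) * L2x) * ((ne : ℝ) * L2z) := by
      refine mul_le_mul (mul_le_mul_of_nonneg_left h4 (sq_nonneg μm)) h5 hL1z20 ?_
      exact mul_nonneg (sq_nonneg μm) (mul_nonneg (by positivity) hL2x.le)
    have hchain : α * L2x * (β * L2z) ≤ Y ^ 2 := by
      have := mul_le_mul h1 h2 (mul_nonneg hβ.le hL2z0) hY0
      calc α * L2x * (β * L2z) ≤ Y * Y := this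
        _ = Y ^ 2 := (sq Y).symm
    rcases eq_or_lt_of_le hL2z0 with hzz | hzz
    · have hY20 : Y ^ 2 ≤ 0 := by
        rw [← hzz] at hstep1
        nlinarith [hY2, hstep1]
      have hYpos : 0 < Y := lt_of_lt_of_le (mul_pos hα hL2x) h1
      nlinarith [hY20, hYpos]
    · have hstrict : μm ^ 2 * (2 * (nx : ℝ) * (ne : ℝ)) * (L2x * L2z)
          < α * β * (L2x * L2z) :=
        mul_lt_mul_of_pos_right hcond' (mul_pos hL2x hzz)
      nlinarith [hchain, hY2, hstep1, hstrict]
  refine ⟨part1, key, fun x x' hx hx' heq => ?_⟩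
  have h := key (x' - x) ?_ ?_
  · exact sub_eq_zero.mp h
  · exact le_trans (l0_sub_le x' x) (by omega)
  · rw [Matrix.mulVec_sub, heq, sub_self]
end

section
/- Let t be an even positive integer and M = t². Define x = comb_{2t} − comb_t ∈ ℂ^M and x' = comb_{2t} ∈ ℂ^M. Then x ≠ x', ‖x‖₀ = ‖x'‖₀ = t/2, ‖x‖₁ = ‖x'‖₁ = t/2, and F_M x' − F_M x = comb_t, whose support is contained in E = supp(comb_t). Consequently, with e = comb_t and z = F_M x + e, both x and x' satisfy the constraint 'F_M x̃ − z lies in the column span of (I_M)_E' and have equal ℓ⁰- and ℓ¹-norms, showing tightness of the recovery condition 2 n_x n_e < M for the pair (F_M, I_M) when only E is known. -/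
open scoped BigOperators ComplexConjugate
open Matrix

/-- The M×M unitary DFT matrix, 0-indexed. -/
noncomputable def dft (M : ℕ) : Matrix (Fin M) (Fin M) ℂ :=
  fun j k => ((Real.sqrt M : ℝ) : ℂ)⁻¹ *
    Complex.exp (-(2 * Real.pi * Complex.I * ((j : ℕ) : ℂ) * ((k : ℕ) : ℂ)) / (M : ℂ))

/-- Comb signal: 1 at indices divisible by t, 0 elsewhere. -/
def comb (M t : ℕ) : Fin M → ℂ := fun j => if t ∣ (j : ℕ) then 1 else 0

lemma aux_exp_one (t j : ℕ) (ht : 0 < t) (h : t ∣ j) :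
    Complex.exp (-(2 * Real.pi * Complex.I * (j : ℂ)) / (t : ℂ)) = 1 := by
  obtain ⟨q, rfl⟩ := h
  have ht' : (t : ℂ) ≠ 0 := Nat.cast_ne_zero.mpr ht.ne'
  have : (-(2 * Real.pi * Complex.I * ((t * q : ℕ) : ℂ)) / (t : ℂ))
      = ((-q : ℤ) : ℂ) * (2 * Real.pi * Complex.I) := by
    push_cast; field_simp
  rw [this, Complex.exp_int_mul_two_pi_mul_I]

lemma aux_exp_ne_one (t j : ℕ) (ht : 0 < t) (h : ¬ t ∣ j) :
    Complex.exp (-(2 * Real.pi * Complex.I * (j : ℂ)) / (t : ℂ)) ≠ 1 := by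
  intro hc
  rw [Complex.exp_eq_one_iff] at hc
  obtain ⟨n, hn⟩ := hc
  have ht' : (t : ℂ) ≠ 0 := Nat.cast_ne_zero.mpr ht.ne'
  have hI : (2 * (Real.pi:ℂ) * Complex.I) ≠ 0 := by
    simp [Complex.I_ne_zero, Real.pi_ne_zero, Complex.ofReal_ne_zero]
  field_simp at hn
  have hj : (j : ℂ) = (((-n) * t : ℤ) : ℂ) := by
    apply mul_left_cancel₀ hI
    push_cast
    linear_combination (-(2 * (Real.pi:ℂ) * Complex.I)) * hn
  have hj' : (j : ℤ) = (-n) * t := by exact_mod_cast hj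
  exact h (Int.natCast_dvd_natCast.mp ⟨-n, by rw [hj', mul_comm]⟩)

lemma dft_comb (t : ℕ) (ht : 0 < t) :
    (dft (t^2)).mulVec (comb (t^2) t) = comb (t^2) t := by
  funext j
  have ht' : (t : ℂ) ≠ 0 := Nat.cast_ne_zero.mpr ht.ne'
  have hsq : ((Real.sqrt ((t^2 : ℕ) : ℝ) : ℝ) : ℂ) = (t : ℂ) := by
    have : ((t^2 : ℕ) : ℝ) = (t : ℝ) ^ 2 := by push_cast; ring
    rw [this, Real.sqrt_sq (by positivity)]
    norm_cast
  set ζ : ℂ := Complex.exp (-(2 * Real.pi * Complex.I * (j : ℂ)) / (t : ℂ)) with hζ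
  have key : (dft (t^2)).mulVec (comb (t^2) t) j = (t : ℂ)⁻¹ * ∑ m ∈ Finset.range t, ζ ^ m := by
    simp only [Matrix.mulVec, dotProduct, dft, comb, mul_ite, mul_one, mul_zero, hsq]
    rw [Fin.sum_univ_eq_sum_range
      (fun n => if t ∣ n then (t:ℂ)⁻¹ * Complex.exp (-(2 * Real.pi * Complex.I * (j:ℂ) * (n:ℂ)) / ((t^2 : ℕ) : ℂ)) else 0)]
    rw [← Finset.sum_filter, Finset.mul_sum]
    apply Finset.sum_nbij' (i := fun n => n / t) (j := fun m => t * m)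
    · intro a ha
      simp only [Finset.mem_filter, Finset.mem_range] at ha
      simp only [Finset.mem_range]
      obtain ⟨halt, k, rfl⟩ := ha
      rw [Nat.mul_div_cancel_left _ ht]
      by_contra hk
      push_neg at hk
      nlinarith
    · intro m hm
      simp only [Finset.mem_range] at hm
      simp only [Finset.mem_filter, Finset.mem_range]
      exact ⟨by nlinarith, Dvd.intro m rfl⟩
    · intro a ha
      simp only [Finset.mem_filter] at ha
      obtain ⟨-, k, rfl⟩ := ha
      rw [Nat.mul_div_cancel_left _ ht]
    · intro m hm
      rw [Nat.mul_div_cancel_left _ ht]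
    · intro a ha
      simp only [Finset.mem_filter, Finset.mem_range] at ha
      obtain ⟨-, k, rfl⟩ := ha
      rw [Nat.mul_div_cancel_left _ ht]
      congr 1
      rw [hζ, ← Complex.exp_nat_mul]
      congr 1
      push_cast
      field_simp
  rw [key]
  by_cases hdvd : t ∣ (j : ℕ)
  · have hζ1 : ζ = 1 := aux_exp_one t j ht hdvd
    simp [comb, hdvd, hζ1, Finset.sum_const, inv_mul_cancel₀ ht']
  · have hζ1 : ζ ≠ 1 := aux_exp_ne_one t j ht hdvd
    have hζt : ζ ^ t = 1 := by
      rw [hζ, ← Complex.exp_nat_mul]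
      have : (t : ℂ) * (-(2 * Real.pi * Complex.I * (j : ℂ)) / (t : ℂ))
          = -(2 * Real.pi * Complex.I * (j : ℂ)) / (1 : ℂ) := by field_simp
      rw [this]
      simpa using aux_exp_one 1 (j : ℕ) one_pos (one_dvd _)
    rw [geom_sum_eq hζ1 t]
    rw [hζt]
    simp [comb, hdvd]

lemma fin_filter_card (M : ℕ) (p : ℕ → Prop) [DecidablePred p] :
    ((Finset.univ : Finset (Fin M)).filter (fun j : Fin M => p (j : ℕ))).card
      = ((Finset.range M).filter p).card := by
  have h : ((Finset.range M).filter p)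
      = ((Finset.univ : Finset (Fin M)).filter (fun j : Fin M => p (j : ℕ))).image Fin.val := by
    ext n
    simp only [Finset.mem_image, Finset.mem_filter, Finset.mem_univ, true_and,
      Finset.mem_range]
    constructor
    · rintro ⟨hn, hp⟩; exact ⟨⟨n, hn⟩, hp, rfl⟩
    · rintro ⟨j, hj, rfl⟩; exact ⟨j.isLt, hj⟩
  rw [h, Finset.card_image_of_injective _ Fin.val_injective]

lemma card_multiples (d n : ℕ) (hd : 0 < d) :
    ((Finset.range (d * n)).filter (d ∣ ·)).card = n := by
  have h : ((Finset.range (d * n)).filter (d ∣ ·)).card = (Finset.range n).card := by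
    apply Finset.card_nbij' (i := (· / d)) (j := (d * ·))
    · intro a ha
      simp only [Finset.mem_coe, Finset.mem_filter, Finset.mem_range] at ha
      obtain ⟨hlt, k, rfl⟩ := ha
      simp only [Finset.mem_coe, Finset.mem_range]
      rw [Nat.mul_div_cancel_left _ hd]
      exact lt_of_mul_lt_mul_left hlt (Nat.zero_le d)
    · intro m hm
      simp only [Finset.mem_coe, Finset.mem_range] at hm
      simp only [Finset.mem_coe, Finset.mem_filter, Finset.mem_range]
      exact ⟨Nat.mul_lt_mul_left hd |>.mpr hm, Dvd.intro m rfl⟩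
    · intro a ha
      simp only [Finset.mem_coe, Finset.mem_filter] at ha
      obtain ⟨-, k, rfl⟩ := ha
      dsimp only
      rw [Nat.mul_div_cancel_left _ hd]
    · intro m _
      dsimp only
      rw [Nat.mul_div_cancel_left _ hd]
  rw [h, Finset.card_range]

lemma card_odd_multiples (d n : ℕ) (hd : 0 < d) :
    ((Finset.range (d * (2 * n))).filter (fun a => d ∣ a ∧ ¬ (2 * d) ∣ a)).card = n := by
  have h : ((Finset.range (d * (2 * n))).filter (fun a => d ∣ a ∧ ¬ (2 * d) ∣ a)).card
      = (Finset.range n).card := by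
    apply Finset.card_nbij' (i := fun a => a / d / 2) (j := fun m => d * (2 * m + 1))
    · intro a ha
      simp only [Finset.mem_coe, Finset.mem_filter, Finset.mem_range] at ha
      obtain ⟨hlt, ⟨k, rfl⟩, hnd⟩ := ha
      have hk : ¬ 2 ∣ k := by
        rintro ⟨q, rfl⟩; exact hnd ⟨q, by ring⟩
      simp only [Finset.mem_coe, Finset.mem_range]
      rw [Nat.mul_div_cancel_left _ hd]
      have hklt : k < 2 * n := lt_of_mul_lt_mul_left hlt (Nat.zero_le d)
      omega
    · intro m hm
      simp only [Finset.mem_coe, Finset.mem_range] at hm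
      simp only [Finset.mem_coe, Finset.mem_filter, Finset.mem_range]
      refine ⟨Nat.mul_lt_mul_left hd |>.mpr (by omega), ⟨2 * m + 1, rfl⟩, ?_⟩
      rintro ⟨q, hq⟩
      have hq' : d * (2 * m + 1) = d * (2 * q) := by rw [hq]; ring
      have := Nat.eq_of_mul_eq_mul_left hd hq'
      omega
    · intro a ha
      simp only [Finset.mem_coe, Finset.mem_filter, Finset.mem_range] at ha
      obtain ⟨hlt, ⟨k, rfl⟩, hnd⟩ := ha
      have hk : ¬ 2 ∣ k := by
        rintro ⟨q, rfl⟩; exact hnd ⟨q, by ring⟩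
      dsimp only
      rw [Nat.mul_div_cancel_left _ hd]
      congr 1
      omega
    · intro m _
      dsimp only
      rw [Nat.mul_div_cancel_left _ hd]
      omega
  rw [h, Finset.card_range]
/-- Tightness of the recovery condition 2 n_x n_e < M for the pair (F_M, I_M) when only
E is known: two distinct signals with equal ℓ⁰- and ℓ¹-norms both satisfy the (BP,E)
constraint for the same measurement. -/
theorem tightness_only_E_known
    (t : ℕ) (ht : 0 < t) (hteven : Even t) (M : ℕ) (hM : M = t ^ 2)
    (x x' e z : Fin M → ℂ) (E : Set (Fin M))
    (hx : x = comb M (2 * t) - comb M t)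
    (hx' : x' = comb M (2 * t))
    (he : e = comb M t)
    (hE : E = Function.support (comb M t))
    (hz : z = (dft M).mulVec x + e) :
    x ≠ x' ∧
    l0 x = t / 2 ∧ l0 x' = t / 2 ∧
    l1 x = ((t / 2 : ℕ) : ℝ) ∧ l1 x' = ((t / 2 : ℕ) : ℝ) ∧
    (dft M).mulVec x' - (dft M).mulVec x = comb M t ∧
    Function.support ((dft M).mulVec x - z) ⊆ E ∧
    Function.support ((dft M).mulVec x' - z) ⊆ E := by
  obtain ⟨s, hts⟩ := hteven
  have hs2 : t = 2 * s := by omega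
  have hs : 0 < s := by omega
  have hts2 : t / 2 = s := by omega
  subst hM hz hE he hx' hx
  have hM2 : t ^ 2 = (2 * t) * s := by rw [hs2]; ring
  have hM3 : t ^ 2 = t * (2 * s) := by rw [hs2]; ring
  have ht2 : t ∣ 2 * t := dvd_mul_left t 2
  set X := comb (t ^ 2) (2 * t) - comb (t ^ 2) t with hX
  have hXval : ∀ j : Fin (t ^ 2),
      X j = if t ∣ (j : ℕ) ∧ ¬ (2 * t) ∣ (j : ℕ) then -1 else 0 := by
    intro j
    by_cases h2 : (2 * t) ∣ (j : ℕ)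
    · have h1 : t ∣ (j : ℕ) := ht2.trans h2
      simp [hX, comb, h1, h2]
    · by_cases h1 : t ∣ (j : ℕ) <;> simp [hX, comb, h1, h2]
  have hMpos : 0 < t ^ 2 := by positivity
  have hl0x : l0 X = s := by
    have hset : {i | X i ≠ 0}
        = ↑(Finset.univ.filter (fun j : Fin (t ^ 2) => t ∣ (j : ℕ) ∧ ¬ (2 * t) ∣ (j : ℕ))) := by
      ext j
      simp only [Set.mem_setOf_eq, Finset.coe_filter, Finset.mem_univ, true_and, hXval j]
      by_cases h : t ∣ (j : ℕ) ∧ ¬ (2 * t) ∣ (j : ℕ) <;> simp [h]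
    rw [l0, hset, Set.ncard_coe_finset,
      fin_filter_card (t ^ 2) (fun a => t ∣ a ∧ ¬ (2 * t) ∣ a), hM3,
      card_odd_multiples t s ht]
  have hl0x' : l0 (comb (t ^ 2) (2 * t)) = s := by
    have hset : {i | comb (t ^ 2) (2 * t) i ≠ 0}
        = ↑(Finset.univ.filter (fun j : Fin (t ^ 2) => (2 * t) ∣ (j : ℕ))) := by
      ext j
      simp only [Set.mem_setOf_eq, Finset.coe_filter, Finset.mem_univ, true_and, comb]
      by_cases h : (2 * t) ∣ (j : ℕ) <;> simp [h]
    rw [l0, hset, Set.ncard_coe_finset,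
      fin_filter_card (t ^ 2) (fun a => (2 * t) ∣ a), hM2,
      card_multiples (2 * t) s (by omega)]
  have hsub : (dft (t ^ 2)).mulVec (comb (t ^ 2) (2 * t)) - (dft (t ^ 2)).mulVec X
      = comb (t ^ 2) t := by
    rw [← Matrix.mulVec_sub]
    have h : comb (t ^ 2) (2 * t) - X = comb (t ^ 2) t := by rw [hX]; abel
    rw [h, dft_comb t ht]
  refine ⟨?_, ?_, ?_, ?_, ?_, hsub, ?_, ?_⟩
  · intro h
    have h0 := congrFun h ⟨0, hMpos⟩
    rw [hXval ⟨0, hMpos⟩] at h0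
    simp [comb] at h0
  · rw [hl0x, hts2]
  · rw [hl0x', hts2]
  · have hn : ∀ j : Fin (t ^ 2),
        ‖X j‖ = if t ∣ (j : ℕ) ∧ ¬ (2 * t) ∣ (j : ℕ) then 1 else 0 := by
      intro j; rw [hXval j]; split <;> simp
    rw [l1]
    simp_rw [hn]
    rw [Finset.sum_boole, fin_filter_card (t ^ 2) (fun a => t ∣ a ∧ ¬ (2 * t) ∣ a), hM3,
      card_odd_multiples t s ht, hts2]
  · have hn : ∀ j : Fin (t ^ 2),
        ‖comb (t ^ 2) (2 * t) j‖ = if (2 * t) ∣ (j : ℕ) then 1 else 0 := by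
      intro j; rw [comb]; split <;> simp
    rw [l1]
    simp_rw [hn]
    rw [Finset.sum_boole, fin_filter_card (t ^ 2) (fun a => (2 * t) ∣ a), hM2,
      card_multiples (2 * t) s (by omega), hts2]
  · have h : (dft (t ^ 2)).mulVec X - ((dft (t ^ 2)).mulVec X + comb (t ^ 2) t)
        = -comb (t ^ 2) t := by ring
    rw [h]
    intro j hj
    simp only [Function.mem_support, Pi.neg_apply, neg_ne_zero] at hj
    exact hj
  · have h : (dft (t ^ 2)).mulVec (comb (t ^ 2) (2 * t))
        - ((dft (t ^ 2)).mulVec X + comb (t ^ 2) t)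
        = ((dft (t ^ 2)).mulVec (comb (t ^ 2) (2 * t)) - (dft (t ^ 2)).mulVec X)
          - comb (t ^ 2) t := by ring
    rw [h, hsub, sub_self]
    simp
end
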